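/- arXiv:2303.00447 — 6 statements merged into one kernel-verified Lean document; each statement's English description precedes it below -/
import Mathlib

section
/- Let Γ be a finite abelian group, R = ℤ[Γ], N_Γ the norm element, and R̄ = R/(N_Γ). For every short exact sequence of R-modules 0 → J → P → ℤ → 0, where ℤ carries the trivial Γ-action, the induced sequence 0 → R̄ ⊗_R J → R̄ ⊗_R P → ℤ/(#Γ)ℤ → 0 is exact (the last map being the composition of R̄ ⊗_R P → R̄ ⊗_R ℤ with the canonical isomorphism R̄ ⊗_R ℤ ≅ ℤ/(#Γ)ℤ). -/
/-!
Tensoring with `R̄ = R ⧸ (N_Γ)` is reduction modulo `N_Γ`; it is right exact, so only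
injectivity on the left and the identification of `R̄ ⊗ ℤ` need an argument. The norm element
acts on `ℤ` as multiplication by `#Γ ≠ 0`, hence is a non-zero-divisor on `ℤ`, and reducing a
short exact sequence modulo an element that is regular on its last term keeps the first map
injective (`Tor₁(R ⧸ (r), ℤ) = 0`). Finally `R̄ ⊗ ℤ = ℤ ⧸ N_Γ ℤ = ℤ ⧸ #Γ ℤ`.
-/

set_option synthInstance.maxHeartbeats 1000000
set_option maxHeartbeats 1000000

section Defs

variable (Γ : Type) [CommGroup Γ] [Fintype Γ]

/-- The augmentation map ℤ[Γ] → ℤ. -/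
noncomputable def aug : MonoidAlgebra ℤ Γ →+* ℤ :=
  ((MonoidAlgebra.lift ℤ ℤ Γ) 1).toRingHom

/-- ℤ regarded as a ℤ[Γ]-module with trivial Γ-action (scalars act through the
augmentation, so every γ ∈ Γ acts as the identity). -/
noncomputable instance trivialIntModule : Module (MonoidAlgebra ℤ Γ) ℤ :=
  Module.compHom ℤ (aug Γ)

/-- The norm element N_Γ = Σ_{γ∈Γ} γ of ℤ[Γ]. -/
noncomputable def normElt : MonoidAlgebra ℤ Γ := ∑ γ : Γ, MonoidAlgebra.of ℤ Γ γ

/-- R̄ = ℤ[Γ]/(N_Γ). -/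
abbrev Rbar := MonoidAlgebra ℤ Γ ⧸ Ideal.span {normElt Γ}

/-- The canonical map ℤ/(#Γ)ℤ → R̄ ⊗_R ℤ, k ↦ k·(1 ⊗ 1); it realizes the canonical
isomorphism R̄ ⊗_R ℤ ≅ ℤ/(#Γ)ℤ. -/
noncomputable def canonicalMap (k : ZMod (Fintype.card Γ)) :
    TensorProduct (MonoidAlgebra ℤ Γ) (Rbar Γ) ℤ :=
  k.val • ((1 : Rbar Γ) ⊗ₜ[MonoidAlgebra ℤ Γ] (1 : ℤ))

end Defs

open Function Submodule

open scoped Pointwise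

section QuotSMulTop

variable {R : Type*} [CommRing R] {r : R}
  {M M' M'' : Type*} [AddCommGroup M] [Module R M] [AddCommGroup M'] [Module R M']
  [AddCommGroup M''] [Module R M'']

theorem QuotSMulTop.map_injective_of_isSMulRegular {f : M →ₗ[R] M'} {g : M' →ₗ[R] M''}
    (hf : Injective f) (hfg : Exact f g) (hr : IsSMulRegular M'' r) :
    Injective (QuotSMulTop.map r f) := by
  have hzero : Exact (0 : PUnit →ₗ[R] M) f := by
    rwa [LinearMap.exact_zero_iff_injective]
  have h := QuotSMulTop.map_first_exact_on_four_term_exact_of_isSMulRegular_last hzero hfg hr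
  rwa [map_zero, LinearMap.exact_zero_iff_injective] at h

theorem LinearMap.lTensor_quotient_span_singleton_injective {f : M →ₗ[R] M'}
    {g : M' →ₗ[R] M''} (hf : Injective f) (hfg : Exact f g) (hr : IsSMulRegular M'' r) :
    Injective (f.lTensor (R ⧸ Ideal.span {r})) := by
  have h := congrArg DFunLike.coe (QuotSMulTop.equivQuotTensor_naturality r f)
  simp only [LinearMap.coe_comp, LinearEquiv.coe_coe] at h
  refine Injective.of_comp_right ?_ (QuotSMulTop.equivQuotTensor r M).surjective
  rw [← h]
  exact (LinearEquiv.injective _).comp (QuotSMulTop.map_injective_of_isSMulRegular hf hfg hr)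

end QuotSMulTop

section GroupRing

variable (Γ : Type) [CommGroup Γ] [Fintype Γ]

theorem normElt_smul_int (z : ℤ) : normElt Γ • z = Fintype.card Γ * z := by
  change aug Γ (normElt Γ) * z = _
  simp [aug, normElt, map_sum]

theorem isSMulRegular_normElt_int : IsSMulRegular ℤ (normElt Γ) := by
  intro a b hab
  simpa [normElt_smul_int, Fintype.card_ne_zero] using hab

theorem mem_normElt_smul_top_int_iff (z : ℤ) :
    z ∈ normElt Γ • (⊤ : Submodule (MonoidAlgebra ℤ Γ) ℤ) ↔ (Fintype.card Γ : ℤ) ∣ z := by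
  simp [mem_smul_pointwise_iff_exists, normElt_smul_int, dvd_def, eq_comm]

theorem canonicalMap_eq (k : ZMod (Fintype.card Γ)) :
    canonicalMap Γ k =
      QuotSMulTop.equivQuotTensor (normElt Γ) ℤ (Submodule.Quotient.mk (k.val : ℤ)) := by
  rw [canonicalMap, QuotSMulTop.equivQuotTensor, LinearEquiv.trans_apply, quotEquivOfEq_mk,
    TensorProduct.quotTensorEquivQuotSMul_symm_mk, ← TensorProduct.tmul_smul]
  simp

theorem bijective_mk_zmod_val :
    Bijective fun k : ZMod (Fintype.card Γ) ↦
      (Submodule.Quotient.mk (k.val : ℤ) : QuotSMulTop (normElt Γ) ℤ) := by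
  have hmk (a b : ℤ) : (Submodule.Quotient.mk a : QuotSMulTop (normElt Γ) ℤ) =
      Submodule.Quotient.mk b ↔ (a : ZMod (Fintype.card Γ)) = b := by
    rw [Submodule.Quotient.eq, mem_normElt_smul_top_int_iff, ZMod.intCast_eq_intCast_iff_dvd_sub,
      ← dvd_neg, neg_sub]
  refine ⟨fun k k' h ↦ by simpa using (hmk _ _).mp h, fun x ↦ ?_⟩
  obtain ⟨a, rfl⟩ := Submodule.Quotient.mk_surjective _ x
  exact ⟨a, (hmk _ _).mpr (by simp)⟩

theorem canonicalMap_bijective : Bijective (canonicalMap Γ) := by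
  have h : canonicalMap Γ = _ ∘ fun k : ZMod (Fintype.card Γ) ↦
      (Submodule.Quotient.mk (k.val : ℤ) : QuotSMulTop (normElt Γ) ℤ) :=
    funext (canonicalMap_eq Γ)
  rw [h]
  exact (LinearEquiv.bijective _).comp (bijective_mk_zmod_val Γ)

end GroupRing

theorem tensor_short_exact_sequence (Γ : Type) [CommGroup Γ] [Fintype Γ]
    (J P : Type) [AddCommGroup J] [AddCommGroup P]
    [Module (MonoidAlgebra ℤ Γ) J] [Module (MonoidAlgebra ℤ Γ) P]
    (f : J →ₗ[MonoidAlgebra ℤ Γ] P) (g : P →ₗ[MonoidAlgebra ℤ Γ] ℤ)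
    (hf : Function.Injective f) (hfg : Function.Exact f g) (hg : Function.Surjective g) :
    Function.Injective (LinearMap.lTensor (Rbar Γ) f) ∧
      Function.Exact (LinearMap.lTensor (Rbar Γ) f) (LinearMap.lTensor (Rbar Γ) g) ∧
      Function.Surjective (LinearMap.lTensor (Rbar Γ) g) ∧
      Function.Bijective (canonicalMap Γ) :=
  ⟨LinearMap.lTensor_quotient_span_singleton_injective hf hfg (isSMulRegular_normElt_int Γ),
    lTensor_exact (Rbar Γ) hfg hg, LinearMap.lTensor_surjective (Rbar Γ) hg,
    canonicalMap_bijective Γ⟩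
end

section
/- Let V be a finite nonempty set and let L : V × V → ℤ be an integer Laplacian-type matrix (symmetric, L(v,w) ≤ 0 for v ≠ w, all row sums zero) whose support graph is connected. Then the kernel of the induced ℤ-linear endomorphism L : ℤ^V → ℤ^V is exactly ℤ·𝟙, the span of the all-ones vector; consequently the complex 0 → ℤ → ℤ^V → ℤ^V → ℤ → 0, where the first map sends 1 to 𝟙, the middle map is L, and the last map is deg (the sum of coordinates), is exact everywhere except at the right-hand copy of ℤ^V, where the homology group ker(deg)/L(ℤ^V) is finite. -/
/-!
Over any linearly ordered ring, a vector in the kernel of a Laplacian-type matrix satisfies a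
maximum principle: at a vertex where it is maximal, the row equation is a sum of nonnegative
terms `L a w * (x w - max)`, so the maximum spreads to every neighbour in the support graph, and
connectivity makes the vector constant. Over `ℤ` this gives `ker L = ℤ·𝟙` of rank `1`, so by
rank–nullity both `L(ℤ^V)` and `ker deg` have rank `|V| - 1`; a full-rank sublattice of a free
`ℤ`-module of finite rank has finite index.
-/

open Finset Module

theorem finrank_span_singleton_of_isTorsionFree {R M : Type*} [Ring R] [IsDomain R]
    [StrongRankCondition R] [AddCommGroup M] [Module R M] [IsTorsionFree R M] {v : M}
    (hv : v ≠ 0) : finrank R (Submodule.span R {v}) = 1 := by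
  simpa using finrank_span_set_eq_card (LinearIndepOn.singleton (R := R) (v := id) hv)

theorem LinearMap.finrank_range_add_finrank_ker_of_isDomain {R M N : Type*} [CommRing R]
    [IsDomain R] [AddCommGroup M] [Module R M] [Module.Finite R M] [AddCommGroup N] [Module R N]
    (f : M →ₗ[R] N) : finrank R (range f) + finrank R (ker f) = finrank R M := by
  rw [← f.quotKerEquivRange.finrank_eq, Submodule.finrank_quotient_add_finrank]

theorem Submodule.finite_quotient_comap_subtype_of_finrank_eq {M : Type*} [AddCommGroup M]
    [Module.Free ℤ M] [Module.Finite ℤ M] {N K : Submodule ℤ M} (hNK : N ≤ K)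
    (h : finrank ℤ N = finrank ℤ K) : Finite (K ⧸ N.comap K.subtype) :=
  finiteQuotientOfFreeOfRankEq _ ((N.comapSubtypeEquivOfLe hNK).finrank_eq.trans h)

namespace Matrix

variable {V R : Type*} [Fintype V]

theorem sum_mulVec_eq_zero [NonUnitalNonAssocSemiring R] {A : Matrix V V R}
    (hcol : ∀ w, ∑ v, A v w = 0) (x : V → R) : ∑ v, (A *ᵥ x) v = 0 := by
  simp only [mulVec, dotProduct]
  rw [sum_comm]
  exact sum_eq_zero fun w _ => by rw [← sum_mul, hcol w, zero_mul]

section MaximumPrinciple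

variable [CommRing R] [LinearOrder R] [IsStrictOrderedRing R] {A : Matrix V V R}

theorem apply_eq_of_mulVec_eq_zero_of_isMax (hoff : ∀ v w, v ≠ w → A v w ≤ 0)
    (hrow : ∀ v, ∑ w, A v w = 0) {x : V → R} (hx : A *ᵥ x = 0) {M : R} (hM : ∀ v, x v ≤ M)
    {a b : V} (ha : x a = M) (hab : A a b ≠ 0) : x b = M := by
  have hsum : ∑ w, A a w * (x w - M) = 0 := by
    have hxa : ∑ w, A a w * x w = 0 := congrFun hx a
    simp only [mul_sub, sum_sub_distrib, ← sum_mul, hxa, hrow a, zero_mul, sub_zero]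
  have hnonneg : ∀ w ∈ univ, 0 ≤ A a w * (x w - M) := by
    intro w _
    rcases eq_or_ne a w with rfl | hne
    · simp [ha]
    · exact mul_nonneg_of_nonpos_of_nonpos (hoff a w hne) (sub_nonpos.2 (hM w))
  have hb := (sum_eq_zero_iff_of_nonneg hnonneg).1 hsum b (mem_univ b)
  exact sub_eq_zero.1 ((mul_eq_zero.1 hb).resolve_left hab)

theorem apply_eq_apply_of_mulVec_eq_zero (hsymm : ∀ v w, A v w = A w v)
    (hoff : ∀ v w, v ≠ w → A v w ≤ 0) (hrow : ∀ v, ∑ w, A v w = 0)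
    (hconn : (SimpleGraph.fromRel fun v w => A v w ≠ 0).Connected)
    {x : V → R} (hx : A *ᵥ x = 0) (v w : V) : x v = x w := by
  have : Nonempty V := ⟨v⟩
  obtain ⟨m, hm⟩ := Finite.exists_max x
  have hwalk : ∀ {a b : V}, (SimpleGraph.fromRel fun v w => A v w ≠ 0).Walk a b →
      x a = x m → x b = x m := by
    intro a b p
    induction p with
    | nil => exact id
    | cons hadj _ ih =>
      refine fun ha => ih (apply_eq_of_mulVec_eq_zero_of_isMax hoff hrow hx hm ha ?_)
      obtain ⟨-, h | h⟩ := hadj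
      exacts [h, hsymm _ _ ▸ h]
  have hmax : ∀ u, x u = x m := fun u => hwalk (hconn.preconnected m u).some rfl
  rw [hmax v, hmax w]

theorem ker_mulVecLin_eq_span_one [Nonempty V] (hsymm : ∀ v w, A v w = A w v)
    (hoff : ∀ v w, v ≠ w → A v w ≤ 0) (hrow : ∀ v, ∑ w, A v w = 0)
    (hconn : (SimpleGraph.fromRel fun v w => A v w ≠ 0).Connected) :
    LinearMap.ker A.mulVecLin = Submodule.span R {(1 : V → R)} := by
  apply le_antisymm
  · intro x hx
    obtain ⟨v⟩ := ‹Nonempty V›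
    refine Submodule.mem_span_singleton.2 ⟨x v, funext fun w => ?_⟩
    simpa using apply_eq_apply_of_mulVec_eq_zero hsymm hoff hrow hconn hx v w
  · rw [Submodule.span_singleton_le_iff_mem, LinearMap.mem_ker, mulVecLin_apply]
    ext v
    simpa [mulVec, dotProduct] using hrow v

end MaximumPrinciple

end Matrix

theorem laplacian_complex_exactness
    (V : Type) [Fintype V] [Nonempty V] (L : V → V → ℤ)
    (hsymm : ∀ v w, L v w = L w v)
    (hoffdiag : ∀ v w, v ≠ w → L v w ≤ 0)
    (hrowsum : ∀ v, ∑ w, L v w = 0)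
    (hconn : (SimpleGraph.fromRel fun v w => L v w ≠ 0).Connected) :
    letI Lmap : (V → ℤ) →ₗ[ℤ] (V → ℤ) := Matrix.mulVecLin (Matrix.of L)
    letI degMap : (V → ℤ) →ₗ[ℤ] ℤ := ∑ v : V, LinearMap.proj v
    letI ι : ℤ →ₗ[ℤ] (V → ℤ) := LinearMap.toSpanSingleton ℤ (V → ℤ) (fun _ => 1)
    -- the sequence is a complex:
    (Lmap (fun _ => 1) = 0) ∧ (∀ x, degMap (Lmap x) = 0) ∧
    -- exactness at the left ℤ:
    Function.Injective ι ∧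
    -- the kernel of L is exactly ℤ·𝟙 (= image of ι), i.e. exactness at the left ℤ^V:
    LinearMap.ker Lmap = Submodule.span ℤ {(fun _ => 1 : V → ℤ)} ∧
    -- exactness at the right ℤ:
    Function.Surjective degMap ∧
    -- the homology at the right ℤ^V, i.e. ker(deg)/L(ℤ^V), is finite:
    Finite ((LinearMap.ker degMap) ⧸
      (Submodule.comap (LinearMap.ker degMap).subtype (LinearMap.range Lmap))) := by
  set Lmap : (V → ℤ) →ₗ[ℤ] (V → ℤ) := Matrix.mulVecLin (Matrix.of L)
  set degMap : (V → ℤ) →ₗ[ℤ] ℤ := ∑ v : V, LinearMap.proj v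
  obtain ⟨v₀⟩ := ‹Nonempty V›
  have hdeg (x : V → ℤ) : degMap x = ∑ v, x v := by simp [degMap]
  have hker : LinearMap.ker Lmap = Submodule.span ℤ {1} :=
    Matrix.ker_mulVecLin_eq_span_one hsymm hoffdiag hrowsum hconn
  have hcomplex (x : V → ℤ) : degMap (Lmap x) = 0 := by
    rw [hdeg]
    exact Matrix.sum_mulVec_eq_zero
      (fun w => (sum_congr rfl fun v _ => hsymm v w).trans (hrowsum w)) x
  have hsurj : Function.Surjective degMap := fun n => by
    classical exact ⟨Pi.single v₀ n, by simp [hdeg]⟩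
  refine ⟨hker.ge (Submodule.mem_span_singleton_self _), hcomplex,
    fun a b hab => by simpa using congrFun hab v₀, hker, hsurj, ?_⟩
  have hrankL := Lmap.finrank_range_add_finrank_ker_of_isDomain
  have hrankDeg := degMap.finrank_range_add_finrank_ker_of_isDomain
  rw [hker, finrank_span_singleton_of_isTorsionFree one_ne_zero] at hrankL
  rw [LinearMap.range_eq_top.2 hsurj, finrank_top, finrank_self] at hrankDeg
  exact Submodule.finite_quotient_comap_subtype_of_finrank_eq
    (by rintro _ ⟨x, rfl⟩; exact hcomplex x) (by omega)
end

section
/- Let Γ be a finite group acting freely on a finite nonempty set V, and let L : V × V → ℤ be a Γ-equivariant integer Laplacian-type matrix (symmetric, nonpositive off-diagonal entries, zero row sums, and L(γ·v, γ·w) = L(v,w) for all γ, v, w) whose support graph is connected. Let N_Γ act on ℤ^V by N_Γ·x = Σ_{γ∈Γ} γ·x, and set Jac := ker(deg)/L(ℤ^V). Then L maps the subgroup N_Γ·ℤ^V into itself, and the homomorphism {x ∈ N_Γ·ℤ^V : deg(x) = 0} / L(N_Γ·ℤ^V) → Jac induced by the inclusion is injective with image exactly N_Γ·Jac. (The source is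 canonically the Jacobian group Jac(X) of the quotient graph X = Y/Γ, so Jac(X) ≅ N_Γ·Jac(Y).) -/
/- Auxiliary definitions for STATEMENT 3.
V is a finite set; ℤ^V = V → ℤ; deg is the sum of coordinates; a matrix L : V × V → ℤ acts
on ℤ^V by (Lx)(v) = Σ_w L(v,w)x(w); a group Γ acting on V acts on ℤ^V by
(γ•x)(v) = x(γ⁻¹•v), and N_Γ acts by N_Γ•x = Σ_γ γ•x.  The Jacobian-type group attached
to L is Jac = ker(deg)/L(ℤ^V). -/

section Defs

variable (V : Type) [Fintype V] (Γ : Type) [Group Γ] [Fintype Γ] [MulAction Γ V]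

/-- deg : ℤ^V → ℤ, the sum of coordinates. -/
noncomputable def degMap : (V → ℤ) →ₗ[ℤ] ℤ := ∑ v : V, LinearMap.proj v

/-- The endomorphism of ℤ^V given by the matrix L. -/
noncomputable def lapMap (L : V → V → ℤ) : (V → ℤ) →ₗ[ℤ] (V → ℤ) :=
  Matrix.mulVecLin (Matrix.of L)

/-- The action of γ ∈ Γ on ℤ^V : (γ • x)(v) = x(γ⁻¹ • v). -/
noncomputable def actMap (γ : Γ) : (V → ℤ) →ₗ[ℤ] (V → ℤ) :=
  LinearMap.funLeft ℤ ℤ fun v => γ⁻¹ • v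

/-- The action of the norm element N_Γ on ℤ^V : N_Γ • x = Σ_γ γ • x. -/
noncomputable def normMap : (V → ℤ) →ₗ[ℤ] (V → ℤ) := ∑ γ : Γ, actMap V Γ γ

/-- Jac = ker(deg)/L(ℤ^V). -/
noncomputable abbrev jacQuot (L : V → V → ℤ) :=
  ↥(LinearMap.ker (degMap V)) ⧸
    Submodule.comap (LinearMap.ker (degMap V)).subtype (LinearMap.range (lapMap V L))

/-- The projection ker(deg) → Jac. -/
noncomputable def jacMk (L : V → V → ℤ) :
    ↥(LinearMap.ker (degMap V)) →ₗ[ℤ] jacQuot V L :=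
  Submodule.mkQ _

/-- The subgroup {x ∈ N_Γ·ℤ^V : deg x = 0}. -/
noncomputable def subK : Submodule ℤ (V → ℤ) :=
  LinearMap.range (normMap V Γ) ⊓ LinearMap.ker (degMap V)

/-- The subgroup L(N_Γ·ℤ^V), viewed inside {x ∈ N_Γ·ℤ^V : deg x = 0}. -/
noncomputable def srcSub (L : V → V → ℤ) : Submodule ℤ ↥(subK V Γ) :=
  Submodule.comap (subK V Γ).subtype
    (Submodule.map (lapMap V L) (LinearMap.range (normMap V Γ)))

/-- The homomorphism {x ∈ N_Γ·ℤ^V : deg x = 0}/L(N_Γ·ℤ^V) → Jac induced by the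
inclusion. -/
noncomputable def inducedMap (L : V → V → ℤ) :
    (↥(subK V Γ) ⧸ srcSub V Γ L) →ₗ[ℤ] jacQuot V L :=
  Submodule.mapQ _ _ (Submodule.inclusion (inf_le_right (a := LinearMap.range (normMap V Γ))))
    (by
      rintro ⟨x, hx⟩ hmem
      obtain ⟨y, -, hy⟩ := hmem
      exact ⟨y, hy.trans rfl⟩)

lemma normMap_mem_ker_degMap (x : V → ℤ) (hx : x ∈ LinearMap.ker (degMap V)) :
    normMap V Γ x ∈ LinearMap.ker (degMap V) := by
  simp only [LinearMap.mem_ker] at hx ⊢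
  have hdeg : ∀ y : V → ℤ, degMap V y = ∑ v, y v := by
    intro y
    simp [degMap]
  have hact : ∀ γ : Γ, degMap V (actMap V Γ γ x) = degMap V x := by
    intro γ
    rw [hdeg, hdeg]
    exact Fintype.sum_equiv (MulAction.toPerm γ⁻¹) _ _ fun v => rfl
  rw [normMap, LinearMap.sum_apply, map_sum]
  simp [hact, hx]

/-- The composite ker(deg) → ker(deg) → Jac given by x ↦ class of N_Γ•x ; its range is
N_Γ·Jac. -/
noncomputable def normOnJac (L : V → V → ℤ) :
    ↥(LinearMap.ker (degMap V)) →ₗ[ℤ] jacQuot V L :=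
  (jacMk V L).comp ((normMap V Γ).restrict (normMap_mem_ker_degMap V Γ))

end Defs

/-!
Because Γ acts freely, `N_Γ · ℤ^V` is exactly the group of Γ-invariant vectors. `L` commutes with
the Γ-action, so it preserves this group. If `L z` is invariant, then for every `γ` the vector
`γ • z - z` lies in `ker L` and has degree zero; by the maximum principle `ker L` consists of
constants on a connected support graph, so `γ • z = z`. Thus an invariant degree-zero vector in
`L(ℤ^V)` already lies in `L(N_Γ · ℤ^V)`, which is injectivity. The image is `N_Γ · Jac` because
`deg (N_Γ x) = |Γ| deg x`, so `N_Γ x` has degree zero exactly when `x` does.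
-/

section Laplacian

variable {V : Type} [Fintype V]

lemma degMap_apply (x : V → ℤ) : degMap V x = ∑ v, x v := by
  simp [degMap]

lemma lapMap_apply (L : V → V → ℤ) (x : V → ℤ) (v : V) :
    lapMap V L x v = ∑ w, L v w * x w := rfl

lemma eq_of_lapMap_eq_zero_of_forall_le {L : V → V → ℤ}
    (hoffdiag : ∀ v w, v ≠ w → L v w ≤ 0) (hrowsum : ∀ v, ∑ w, L v w = 0)
    {x : V → ℤ} (hx : lapMap V L x = 0) {u : V} (hmax : ∀ a, x a ≤ x u)
    {w : V} (hw : L u w ≠ 0) : x w = x u := by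
  have hsum : ∑ a, L u a * (x a - x u) = 0 := by
    simp only [mul_sub, Finset.sum_sub_distrib, ← Finset.sum_mul, hrowsum, zero_mul, sub_zero]
    exact congrFun hx u
  have hnonneg : ∀ a ∈ Finset.univ, 0 ≤ L u a * (x a - x u) := by
    intro a _
    rcases eq_or_ne u a with rfl | hua
    · simp
    · exact mul_nonneg_of_nonpos_of_nonpos (hoffdiag u a hua) (sub_nonpos.mpr (hmax a))
  have hzero := (Finset.sum_eq_zero_iff_of_nonneg hnonneg).mp hsum w (Finset.mem_univ w)
  simpa [hw, sub_eq_zero] using hzero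

lemma eq_of_lapMap_eq_zero {L : V → V → ℤ} (hsymm : ∀ v w, L v w = L w v)
    (hoffdiag : ∀ v w, v ≠ w → L v w ≤ 0) (hrowsum : ∀ v, ∑ w, L v w = 0)
    (hconn : (SimpleGraph.fromRel fun v w => L v w ≠ 0).Connected)
    {x : V → ℤ} (hx : lapMap V L x = 0) (v w : V) : x v = x w := by
  obtain ⟨u, -, hmax⟩ := Finset.exists_max_image Finset.univ x ⟨v, Finset.mem_univ v⟩
  have hstep : ∀ a b, (SimpleGraph.fromRel fun v w => L v w ≠ 0).Adj a b →
      x a = x u → x b = x u := by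
    intro a b hadj ha
    have hab : L a b ≠ 0 := by
      rcases ((SimpleGraph.fromRel_adj _ a b).mp hadj).2 with h | h
      exacts [h, hsymm a b ▸ h]
    rw [← ha]
    exact eq_of_lapMap_eq_zero_of_forall_le hoffdiag hrowsum hx
      (fun c => ha ▸ hmax c (Finset.mem_univ c)) hab
  have hwalk : ∀ {a b} (p : (SimpleGraph.fromRel fun v w => L v w ≠ 0).Walk a b),
      x a = x u → x b = x u := by
    intro a b p
    induction p with
    | nil => exact id
    | cons hadj _ ih => exact fun ha => ih (hstep _ _ hadj ha)
  obtain ⟨p⟩ := hconn.preconnected u v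
  obtain ⟨q⟩ := hconn.preconnected u w
  rw [hwalk p rfl, hwalk q rfl]

lemma eq_zero_of_lapMap_eq_zero {L : V → V → ℤ} (hsymm : ∀ v w, L v w = L w v)
    (hoffdiag : ∀ v w, v ≠ w → L v w ≤ 0) (hrowsum : ∀ v, ∑ w, L v w = 0)
    (hconn : (SimpleGraph.fromRel fun v w => L v w ≠ 0).Connected)
    {x : V → ℤ} (hx : lapMap V L x = 0) (hdeg : degMap V x = 0) : x = 0 := by
  funext v
  have hcard : (Fintype.card V : ℤ) ≠ 0 := by
    exact_mod_cast (Fintype.card_pos_iff.mpr ⟨v⟩).ne'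
  have hdeg' : (Fintype.card V : ℤ) * x v = 0 := by
    rw [← hdeg, degMap_apply, Finset.sum_congr rfl fun w _ =>
      eq_of_lapMap_eq_zero hsymm hoffdiag hrowsum hconn hx w v]
    simp
  exact (mul_eq_zero.mp hdeg').resolve_left hcard

end Laplacian

section GroupAction

variable {V : Type} {Γ : Type} [Group Γ] [MulAction Γ V]

lemma actMap_apply (γ : Γ) (x : V → ℤ) (v : V) : actMap V Γ γ x v = x (γ⁻¹ • v) := rfl

lemma normMap_apply [Fintype Γ] (x : V → ℤ) (v : V) :
    normMap V Γ x v = ∑ γ : Γ, x (γ⁻¹ • v) := by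
  simp [normMap, actMap_apply]

lemma actMap_actMap (γ δ : Γ) (x : V → ℤ) :
    actMap V Γ γ (actMap V Γ δ x) = actMap V Γ (γ * δ) x := by
  funext v
  simp [actMap_apply, mul_inv_rev, mul_smul]

lemma actMap_normMap [Fintype Γ] (γ : Γ) (x : V → ℤ) :
    actMap V Γ γ (normMap V Γ x) = normMap V Γ x := by
  simp only [normMap, LinearMap.sum_apply, map_sum, actMap_actMap]
  exact Fintype.sum_equiv (Equiv.mulLeft γ) _ _ fun _ => rfl

lemma degMap_actMap [Fintype V] (γ : Γ) (x : V → ℤ) :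
    degMap V (actMap V Γ γ x) = degMap V x := by
  simp only [degMap_apply, actMap_apply]
  exact Fintype.sum_equiv (MulAction.toPerm γ⁻¹) _ _ fun _ => rfl

lemma degMap_normMap [Fintype V] [Fintype Γ] (x : V → ℤ) :
    degMap V (normMap V Γ x) = Fintype.card Γ * degMap V x := by
  simp [normMap, LinearMap.sum_apply, map_sum, degMap_actMap]

lemma mem_ker_degMap_of_normMap_mem [Fintype V] [Fintype Γ] {x : V → ℤ}
    (hx : normMap V Γ x ∈ LinearMap.ker (degMap V)) : x ∈ LinearMap.ker (degMap V) := by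
  rw [LinearMap.mem_ker, degMap_normMap] at hx
  exact (mul_eq_zero.mp hx).resolve_left (by exact_mod_cast Fintype.card_ne_zero)

lemma lapMap_actMap [Fintype V] {L : V → V → ℤ}
    (hequiv : ∀ (γ : Γ) (v w : V), L (γ • v) (γ • w) = L v w) (γ : Γ) (x : V → ℤ) :
    lapMap V L (actMap V Γ γ x) = actMap V Γ γ (lapMap V L x) := by
  funext v
  simp only [lapMap_apply, actMap_apply]
  refine Fintype.sum_equiv (MulAction.toPerm γ⁻¹) _ _ fun w => ?_
  simp [← hequiv γ⁻¹ v w]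

lemma lapMap_normMap [Fintype V] [Fintype Γ] {L : V → V → ℤ}
    (hequiv : ∀ (γ : Γ) (v w : V), L (γ • v) (γ • w) = L v w) (x : V → ℤ) :
    lapMap V L (normMap V Γ x) = normMap V Γ (lapMap V L x) := by
  simp [normMap, LinearMap.sum_apply, map_sum, lapMap_actMap hequiv]

lemma map_lapMap_range_normMap_le [Fintype V] [Fintype Γ] {L : V → V → ℤ}
    (hequiv : ∀ (γ : Γ) (v w : V), L (γ • v) (γ • w) = L v w) :
    (LinearMap.range (normMap V Γ)).map (lapMap V L) ≤ LinearMap.range (normMap V Γ) := by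
  rintro _ ⟨_, ⟨y, rfl⟩, rfl⟩
  exact ⟨lapMap V L y, (lapMap_normMap hequiv y).symm⟩

lemma mem_range_normMap_of_forall_actMap_eq [Fintype Γ]
    (hfree : ∀ (γ : Γ) (v : V), γ • v = v → γ = 1)
    {z : V → ℤ} (hz : ∀ γ, actMap V Γ γ z = z) : z ∈ LinearMap.range (normMap V Γ) := by
  classical
  have hinv : ∀ (γ : Γ) v, z (γ • v) = z v := fun γ v => by
    simpa [actMap_apply] using congrFun (hz γ⁻¹) v
  let rep : V → V := fun v => (Quotient.mk (MulAction.orbitRel Γ V) v).out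
  have hrep_smul : ∀ (γ : Γ) v, rep (γ • v) = rep v := fun γ v => by
    simp only [rep, Quotient.sound (MulAction.orbitRel_apply.mpr (MulAction.mem_orbit v γ))]
  refine ⟨fun v => if rep v = v then z v else 0, funext fun v => ?_⟩
  obtain ⟨g, hg⟩ : ∃ g : Γ, g • v = rep v :=
    MulAction.orbitRel_apply.mp (Quotient.mk_out (s := MulAction.orbitRel Γ V) v)
  have hfree' : ∀ γ : Γ, γ • v = g • v ↔ γ = g := fun γ =>
    ⟨fun h => by simpa [mul_inv_eq_one, mul_smul, h] using hfree (γ * g⁻¹) (g • v),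
      by rintro rfl; rfl⟩
  simp [normMap_apply, hrep_smul, hinv, ← hg, hfree', eq_comm (a := g • v), inv_eq_iff_eq_inv]

lemma subK_eq_map_normMap [Fintype V] [Fintype Γ] :
    subK V Γ = (LinearMap.ker (degMap V)).map (normMap V Γ) := by
  ext x
  constructor
  · rintro ⟨⟨y, rfl⟩, hdeg⟩
    exact ⟨y, mem_ker_degMap_of_normMap_mem hdeg, rfl⟩
  · rintro ⟨y, hy, rfl⟩
    exact ⟨⟨y, rfl⟩, normMap_mem_ker_degMap V Γ y hy⟩

lemma mem_map_lapMap_range_normMap [Fintype V] [Fintype Γ]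
    (hfree : ∀ (γ : Γ) (v : V), γ • v = v → γ = 1)
    {L : V → V → ℤ} (hsymm : ∀ v w, L v w = L w v)
    (hoffdiag : ∀ v w, v ≠ w → L v w ≤ 0) (hrowsum : ∀ v, ∑ w, L v w = 0)
    (hequiv : ∀ (γ : Γ) (v w : V), L (γ • v) (γ • w) = L v w)
    (hconn : (SimpleGraph.fromRel fun v w => L v w ≠ 0).Connected)
    {a : V → ℤ} (ha : a ∈ LinearMap.range (normMap V Γ))
    (haL : a ∈ LinearMap.range (lapMap V L)) :
    a ∈ (LinearMap.range (normMap V Γ)).map (lapMap V L) := by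
  obtain ⟨z, rfl⟩ := haL
  obtain ⟨y, hy⟩ := ha
  refine ⟨z, mem_range_normMap_of_forall_actMap_eq hfree fun γ => ?_, rfl⟩
  have hlap : lapMap V L (actMap V Γ γ z - z) = 0 := by
    rw [map_sub, lapMap_actMap hequiv, ← hy, actMap_normMap, sub_self]
  have hdeg : degMap V (actMap V Γ γ z - z) = 0 := by
    rw [map_sub, degMap_actMap, sub_self]
  exact sub_eq_zero.mp (eq_zero_of_lapMap_eq_zero hsymm hoffdiag hrowsum hconn hlap hdeg)

lemma injective_inducedMap [Fintype V] [Fintype Γ]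
    (hfree : ∀ (γ : Γ) (v : V), γ • v = v → γ = 1)
    {L : V → V → ℤ} (hsymm : ∀ v w, L v w = L w v)
    (hoffdiag : ∀ v w, v ≠ w → L v w ≤ 0) (hrowsum : ∀ v, ∑ w, L v w = 0)
    (hequiv : ∀ (γ : Γ) (v w : V), L (γ • v) (γ • w) = L v w)
    (hconn : (SimpleGraph.fromRel fun v w => L v w ≠ 0).Connected) :
    Function.Injective (inducedMap V Γ L) := by
  rw [← LinearMap.ker_eq_bot, Submodule.eq_bot_iff]
  intro q hq
  obtain ⟨a, rfl⟩ := Submodule.Quotient.mk_surjective _ q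
  rw [LinearMap.mem_ker, inducedMap, Submodule.mapQ_apply, Submodule.Quotient.mk_eq_zero] at hq
  rw [Submodule.Quotient.mk_eq_zero]
  exact mem_map_lapMap_range_normMap hfree hsymm hoffdiag hrowsum hequiv hconn a.2.1 hq

lemma range_inducedMap [Fintype V] [Fintype Γ] (L : V → V → ℤ) :
    LinearMap.range (inducedMap V Γ L) = LinearMap.range (normOnJac V Γ L) := by
  ext c
  constructor
  · rintro ⟨q, rfl⟩
    obtain ⟨a, rfl⟩ := Submodule.Quotient.mk_surjective _ q
    obtain ⟨y, hy, hya⟩ : (a : V → ℤ) ∈ (LinearMap.ker (degMap V)).map (normMap V Γ) :=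
      subK_eq_map_normMap (V := V) (Γ := Γ) ▸ a.2
    exact ⟨⟨y, hy⟩, congrArg (jacMk V L) (Subtype.ext hya)⟩
  · rintro ⟨y, rfl⟩
    have hy : normMap V Γ y ∈ subK V Γ :=
      subK_eq_map_normMap (V := V) (Γ := Γ) ▸ ⟨y, y.2, rfl⟩
    exact ⟨Submodule.Quotient.mk ⟨_, hy⟩, rfl⟩

end GroupAction

theorem norm_of_jacobian_general
    (V : Type) [Fintype V] (Γ : Type) [Group Γ] [Fintype Γ] [MulAction Γ V]
    (hfree : ∀ (γ : Γ) (v : V), γ • v = v → γ = 1)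
    (L : V → V → ℤ)
    (hsymm : ∀ v w, L v w = L w v)
    (hoffdiag : ∀ v w, v ≠ w → L v w ≤ 0)
    (hrowsum : ∀ v, ∑ w, L v w = 0)
    (hequiv : ∀ (γ : Γ) (v w : V), L (γ • v) (γ • w) = L v w)
    (hconn : (SimpleGraph.fromRel fun v w => L v w ≠ 0).Connected) :
    Submodule.map (lapMap V L) (LinearMap.range (normMap V Γ)) ≤
        LinearMap.range (normMap V Γ) ∧
      Function.Injective (inducedMap V Γ L) ∧
      LinearMap.range (inducedMap V Γ L) = LinearMap.range (normOnJac V Γ L) := by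
  exact ⟨map_lapMap_range_normMap_le hequiv,
    injective_inducedMap hfree hsymm hoffdiag hrowsum hequiv hconn, range_inducedMap L⟩

theorem norm_of_jacobian
    (V : Type) [Fintype V] [Nonempty V] (Γ : Type) [Group Γ] [Fintype Γ] [MulAction Γ V]
    (hfree : ∀ (γ : Γ) (v : V), γ • v = v → γ = 1)
    (L : V → V → ℤ)
    (hsymm : ∀ v w, L v w = L w v)
    (hoffdiag : ∀ v w, v ≠ w → L v w ≤ 0)
    (hrowsum : ∀ v, ∑ w, L v w = 0)
    (hequiv : ∀ (γ : Γ) (v w : V), L (γ • v) (γ • w) = L v w)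
    (hconn : (SimpleGraph.fromRel fun v w => L v w ≠ 0).Connected) :
    Submodule.map (lapMap V L) (LinearMap.range (normMap V Γ)) ≤
        LinearMap.range (normMap V Γ) ∧
      Function.Injective (inducedMap V Γ L) ∧
      LinearMap.range (inducedMap V Γ L) = LinearMap.range (normOnJac V Γ L) :=
  norm_of_jacobian_general V Γ hfree L hsymm hoffdiag hrowsum hequiv hconn
end

section
/- Let Γ be a finite abelian group, R = ℤ[Γ], I ⊆ R the augmentation ideal (the kernel of the augmentation map ℤ[Γ] → ℤ), N_Γ the norm element, and R̄ = R/(N_Γ). Then #Γ − N_Γ ∈ I, and the sequence 0 → I/R(#Γ − N_Γ) → R̄/(#Γ)R̄ → ℤ/(#Γ)ℤ → 0 is exact, where the first map is induced by the inclusion I ⊆ R followed by the projections R → R̄ → R̄/(#Γ)R̄, and the second map is induced by the augmentation. -/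
section Defs

variable (Γ : Type) [CommGroup Γ] [Fintype Γ]

/-- The element #Γ − N_Γ of ℤ[Γ]. -/
noncomputable def omegaElt : MonoidAlgebra ℤ Γ :=
  (Fintype.card Γ : MonoidAlgebra ℤ Γ) - normElt Γ

/-- The augmentation followed by reduction mod #Γ: ℤ[Γ] → ℤ/(#Γ)ℤ. -/
noncomputable def augMod : MonoidAlgebra ℤ Γ →+* ZMod (Fintype.card Γ) :=
  (Int.castRingHom (ZMod (Fintype.card Γ))).comp (aug Γ)


/-!
The norm element absorbs multiplication through the augmentation: `r * N = ε(r) N`.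
Hence an element `u N + v #Γ` of the augmentation ideal has `#Γ (ε u + ε v) = 0`, so
`ε u = -ε v` and the element equals `v (#Γ - N)`. The augmentation kills `N` and `#Γ`
modulo `#Γ`, which gives the other two exactness statements.
-/

section

variable {Γ : Type} [CommGroup Γ]

lemma aug_of (g : Γ) : aug Γ (MonoidAlgebra.of ℤ Γ g) = 1 := by
  simp [aug]

lemma aug_surjective : Function.Surjective (aug Γ) :=
  fun m => ⟨m, map_intCast (aug Γ) m⟩

variable [Fintype Γ]

lemma aug_normElt : aug Γ (normElt Γ) = Fintype.card Γ := by
  rw [normElt, map_sum]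
  simp only [aug_of, Finset.sum_const, Finset.card_univ, nsmul_eq_mul, mul_one]

lemma of_mul_normElt (g : Γ) : MonoidAlgebra.of ℤ Γ g * normElt Γ = normElt Γ := by
  simp_rw [normElt, Finset.mul_sum, ← map_mul]
  exact Equiv.sum_comp (Equiv.mulLeft g) (fun γ => MonoidAlgebra.of ℤ Γ γ)

lemma mul_normElt (r : MonoidAlgebra ℤ Γ) : r * normElt Γ = aug Γ r • normElt Γ := by
  induction r using MonoidAlgebra.induction_on with
  | of g => rw [of_mul_normElt, aug_of, one_smul]
  | add f g hf hg => rw [add_mul, hf, hg, map_add, add_smul]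
  | smul n f hf => rw [smul_mul_assoc, hf, map_zsmul, smul_eq_mul, mul_smul]

lemma omegaElt_mem_ker_aug : omegaElt Γ ∈ RingHom.ker (aug Γ) := by
  rw [RingHom.mem_ker, omegaElt, map_sub, aug_normElt, map_natCast, sub_self]

lemma mul_omegaElt (r : MonoidAlgebra ℤ Γ) :
    r * omegaElt Γ = r * (Fintype.card Γ : MonoidAlgebra ℤ Γ) - aug Γ r • normElt Γ := by
  rw [omegaElt, mul_sub, mul_normElt]

lemma mem_span_omegaElt_of_mem_ker_aug_of_mem_span {x : MonoidAlgebra ℤ Γ}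
    (hx : x ∈ RingHom.ker (aug Γ))
    (hspan : x ∈ Ideal.span {normElt Γ, (Fintype.card Γ : MonoidAlgebra ℤ Γ)}) :
    x ∈ Ideal.span {omegaElt Γ} := by
  obtain ⟨u, v, rfl⟩ := Ideal.mem_span_pair.mp hspan
  have hsum : (Fintype.card Γ : ℤ) * (aug Γ u + aug Γ v) = 0 := by
    rw [RingHom.mem_ker, map_add, map_mul, map_mul, aug_normElt, map_natCast] at hx
    linear_combination hx
  have haug : aug Γ u = -aug Γ v := by
    have hcard : (Fintype.card Γ : ℤ) ≠ 0 := by exact_mod_cast Fintype.card_ne_zero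
    linear_combination (mul_eq_zero.mp hsum).resolve_left hcard
  refine Ideal.mem_span_singleton'.mpr ⟨v, ?_⟩
  rw [mul_omegaElt, mul_normElt, haug, neg_smul, sub_eq_neg_add]

lemma span_normElt_card_le_ker_augMod :
    Ideal.span {normElt Γ, (Fintype.card Γ : MonoidAlgebra ℤ Γ)} ≤ RingHom.ker (augMod Γ) := by
  rw [Ideal.span_le, Set.insert_subset_iff, Set.singleton_subset_iff]
  constructor
  · simp [augMod, aug_normElt]
  · simp [augMod]

lemma ker_aug_le_ker_augMod : RingHom.ker (aug Γ) ≤ RingHom.ker (augMod Γ) :=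
  fun x hx => by rw [RingHom.mem_ker] at hx ⊢; simp [augMod, hx]

lemma augMod_eq_zero_iff (y : MonoidAlgebra ℤ Γ) :
    augMod Γ y = 0 ↔ ∃ x ∈ RingHom.ker (aug Γ),
      y - x ∈ Ideal.span {normElt Γ, (Fintype.card Γ : MonoidAlgebra ℤ Γ)} := by
  constructor
  · intro hy
    obtain ⟨m, hm⟩ := (ZMod.intCast_zmod_eq_zero_iff_dvd _ _).mp hy
    refine ⟨y - (m : MonoidAlgebra ℤ Γ) * normElt Γ, ?_, ?_⟩
    · rw [RingHom.mem_ker, map_sub, map_mul, map_intCast, aug_normElt, hm]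
      push_cast
      ring
    · rw [sub_sub_cancel]
      exact Ideal.mul_mem_left _ _ (Ideal.subset_span (Set.mem_insert _ _))
  · rintro ⟨x, hx, hspan⟩
    have hyx := span_normElt_card_le_ker_augMod hspan
    rw [RingHom.mem_ker, map_sub, ker_aug_le_ker_augMod hx, sub_zero] at hyx
    exact hyx

lemma augMod_surjective : Function.Surjective (augMod Γ) :=
  (ZMod.intCast_surjective).comp aug_surjective

end

theorem augmentation_ideal_exact_sequence (Γ : Type) [CommGroup Γ] [Fintype Γ] :
    omegaElt Γ ∈ RingHom.ker (aug Γ) ∧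
      (∀ x ∈ RingHom.ker (aug Γ),
        x ∈ Ideal.span {normElt Γ, (Fintype.card Γ : MonoidAlgebra ℤ Γ)} →
        x ∈ Ideal.span {omegaElt Γ}) ∧
      (∀ y : MonoidAlgebra ℤ Γ,
        augMod Γ y = 0 ↔ ∃ x ∈ RingHom.ker (aug Γ),
          y - x ∈ Ideal.span {normElt Γ, (Fintype.card Γ : MonoidAlgebra ℤ Γ)}) ∧
      Function.Surjective (augMod Γ) :=
  ⟨omegaElt_mem_ker_aug, fun _ hx hspan => mem_span_omegaElt_of_mem_ker_aug_of_mem_span hx hspan,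
    augMod_eq_zero_iff, augMod_surjective⟩
end Defs
end

section
/- Let s ≥ 2 and let P = ℤ[T_1,…,T_s,B_1,…,B_s] be the polynomial ring in 2s indeterminates. Let H be the matrix over P with s columns whose rows are the rows of N_s(T_1,…,T_s) together with one additional row (B_1,…,B_s). Then the ideal of P generated by all s×s minors of H equals (Σ_{l=1}^s B_l T_l)·(T_1,…,T_s)^{s−2}, the product of the principal ideal generated by Σ_{l=1}^s B_lT_l and the (s−2)-nd power of the ideal (T_1,…,T_s). (For s = 0 this ideal of maximal minors is the unit ideal, and for s = 1 it is (B_1).) -/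
/-
Write g = ∑ B_l T_l and treat T_1, …, T_s as the variables over the coefficient ring ℤ[B]; the
extra row may then be any vector b, with g = b ⬝ T.

A maximal minor using the row b twice vanishes; one not using it vanishes because all its rows
are orthogonal to T. If it uses b once, the other rows are orthogonal to T, and Cramer's rule shows
that the cofactors u_c along the b-row satisfy T_a u_c = T_c u_a. As T_1, T_2 are coprime this
forces u_c = T_c m for one m, the minor is g m, and m ∈ (T)^(s-2) because u_c has s - 1 rows with
entries in (T).

Conversely, a monomial T^d of degree s - 2 is the degree pattern ∏ T_v^(deg v - 1) of a tree on
s vertices. Taking the b-row together with the rows of N_s indexed by the edges, the cofactor at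
the root becomes triangular once the vertices are listed with parents before children, which
gives m = ± T^d.
-/

open MvPolynomial Matrix Finset

section Cofactor

variable {ι A : Type*} [Fintype ι] [DecidableEq ι] [CommRing A]

theorem Matrix.det_updateRow_mul_eq_dotProduct_mul_adjugate {M : Matrix ι ι A} {t : ι → A}
    {i₀ : ι} (hM : ∀ i ≠ i₀, M i ⬝ᵥ t = 0) (w : ι → A) (c : ι) :
    (M.updateRow i₀ w).det * t c = (w ⬝ᵥ t) * M.adjugate c i₀ := by
  set N := M.updateRow i₀ w
  have hNt : N *ᵥ t = Pi.single i₀ (w ⬝ᵥ t) := by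
    ext i
    rcases eq_or_ne i i₀ with rfl | hi
    · simp [N, mulVec]
    · simp [N, mulVec, hi, hM i hi]
  have := congrFun (congrArg (· *ᵥ t) N.adjugate_mul) c
  simp only [← mulVec_mulVec, hNt, smul_mulVec, one_mulVec, mulVec_single] at this
  simpa [adjugate_apply, N, mul_comm] using this.symm

theorem Matrix.det_mem_pow_of_row_mem {M : Matrix ι ι A} (I : Ideal A) {i₀ : ι}
    (hM : ∀ i ≠ i₀, ∀ j, M i j ∈ I) :
    M.det ∈ I ^ (Fintype.card ι - 1) := by
  rw [det_apply]
  refine Ideal.sum_mem _ fun τ _ => ?_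
  have hk : τ.symm i₀ ∈ (univ : Finset ι) := mem_univ _
  rw [← mul_prod_erase _ _ hk, Units.smul_def]
  refine Submodule.smul_of_tower_mem _ _ (Ideal.mul_mem_left _ _ ?_)
  rw [← card_univ, ← card_erase_of_mem hk, ← prod_const]
  refine Ideal.prod_mem_prod fun i hi => hM _ ?_ _
  rw [← τ.apply_symm_apply i₀]
  exact τ.injective.ne (ne_of_mem_erase hi)

end Cofactor

namespace MvPolynomial

section

variable {σ R : Type*}

theorem mem_pow_idealOfVars_of_X_mul_mem [CommSemiring R] {p : MvPolynomial σ R} {i : σ} {n : ℕ}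
    (h : X i * p ∈ idealOfVars σ R ^ (n + 1)) : p ∈ idealOfVars σ R ^ n := by
  classical
  rw [mem_pow_idealOfVars_iff] at h ⊢
  intro x hx
  have := h _ (by rw [support_X_mul]; exact mem_map_of_mem _ hx)
  simp only [addLeftEmbedding_apply, map_add, Finsupp.degree_single] at this
  omega

theorem exists_eq_X_mul_of_X_mul_comm [CommRing R] [IsDomain R] {u : σ → MvPolynomial σ R}
    {i j : σ} (hij : i ≠ j) (h : ∀ a b, X a * u b = X b * u a) :
    ∃ m, ∀ a, u a = X a * m := by
  obtain ⟨m, hm⟩ : X i ∣ u i := by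
    have hdvd : X i ∣ X j * u i := ⟨u j, h j i⟩
    exact (X_prime.dvd_or_dvd hdvd).resolve_left (mt X_dvd_X.mp hij)
  refine ⟨m, fun a => (X_mul_cancel_left_iff (i := i)).mp ?_⟩
  rw [h i a, hm, mul_left_comm]

end

section

variable {ι R : Type*} [Fintype ι] [DecidableEq ι] [CommRing R] [IsDomain R]

theorem exists_det_updateRow_eq_dotProduct_X_mul {M : Matrix ι ι (MvPolynomial ι R)} {i₀ : ι}
    (hX : ∀ i ≠ i₀, M i ⬝ᵥ X = 0) (hI : ∀ i ≠ i₀, ∀ j, M i j ∈ idealOfVars ι R)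
    {i j : ι} (hij : i ≠ j) :
    ∃ m ∈ idealOfVars ι R ^ (Fintype.card ι - 2),
      ∀ w, (M.updateRow i₀ w).det = (w ⬝ᵥ X) * m := by
  have hcofactor := det_updateRow_mul_eq_dotProduct_mul_adjugate hX
  obtain ⟨m, hm⟩ := exists_eq_X_mul_of_X_mul_comm (u := fun c => M.adjugate c i₀) hij
    fun a b => by simpa [← adjugate_apply, mul_comm] using (hcofactor (Pi.single a 1) b).symm
  refine ⟨m, ?_, fun w => (X_mul_cancel_left_iff (i := i)).mp ?_⟩
  · have hcard : Fintype.card ι - 1 = Fintype.card ι - 2 + 1 := by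
      have := Fintype.one_lt_card_iff.mpr ⟨i, j, hij⟩
      omega
    refine mem_pow_idealOfVars_of_X_mul_mem (i := i) ?_
    rw [← hm, adjugate_apply, ← hcard]
    exact det_mem_pow_of_row_mem _ fun k hk l => by rw [updateRow_ne hk]; exact hI k hk l
  · rw [mul_comm, hcofactor, hm, mul_left_comm]

end

end MvPolynomial

/-- Vertex `k` is to receive `c k` children, handed out in order to the vertices `1, 2, …`:
vertex `j + 1` gets the parent `k` with `∑ i < k, c i ≤ j < ∑ i ≤ k, c i`. -/
def treeParent (c : ℕ → ℕ) (j : ℕ) : ℕ :=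
  Nat.findGreatest (fun k => ∑ i ∈ range k, c i ≤ j) j

theorem treeParent_eq {c : ℕ → ℕ} {j k : ℕ} (hk : k ≤ ∑ i ∈ range k, c i)
    (h₁ : ∑ i ∈ range k, c i ≤ j) (h₂ : j < ∑ i ∈ range (k + 1), c i) : treeParent c j = k := by
  refine Nat.findGreatest_eq_iff.mpr ⟨hk.trans h₁, fun _ => h₁, fun l hkl _ hl => ?_⟩
  have := sum_le_sum_of_subset (f := c) (range_subset_range.mpr (show k + 1 ≤ l from hkl))
  omega

theorem prod_range_treeParent {M : Type*} [CommMonoid M] (c : ℕ → ℕ) (f : ℕ → M) {m : ℕ}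
    (hc : ∀ k < m, k ≤ ∑ i ∈ range k, c i) :
    ∏ j ∈ range (∑ i ∈ range m, c i), f (treeParent c j) = ∏ k ∈ range m, f k ^ c k := by
  induction m with
  | zero => simp
  | succ m ih =>
    have hS : ∑ i ∈ range m, c i ≤ ∑ i ∈ range (m + 1), c i :=
      sum_le_sum_of_subset (range_subset_range.mpr m.le_succ)
    have hIco : ∏ j ∈ Ico (∑ i ∈ range m, c i) (∑ i ∈ range (m + 1), c i), f (treeParent c j)
        = f m ^ c m := by
      rw [prod_congr rfl fun j hj => by rw [treeParent_eq (hc m m.lt_succ_self) (mem_Ico.mp hj).1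
        (mem_Ico.mp hj).2], prod_const, Nat.card_Ico, sum_range_succ, Nat.add_sub_cancel_left]
    rw [← prod_range_mul_prod_Ico _ hS, ih fun k hk => hc k (by omega), hIco, prod_range_succ]

theorem le_sum_range_succ_of_antitoneOn {e : ℕ → ℕ} {k m : ℕ} (he : AntitoneOn e (Set.Iio m))
    (hkm : k < m) (hk : k ≤ ∑ i ∈ range m, e i) : k ≤ ∑ i ∈ range (k + 1), e i := by
  rcases Nat.eq_zero_or_pos (e k) with h0 | hpos
  · have htail : ∀ i ∈ Ico (k + 1) m, e i = 0 := fun i hi => by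
      rw [mem_Ico] at hi
      exact Nat.eq_zero_of_le_zero (h0 ▸ he (by simpa using hkm) (by simp; omega) (by omega))
    rwa [← sum_range_add_sum_Ico _ hkm, sum_eq_zero htail, add_zero] at hk
  · calc k ≤ ∑ _i ∈ range (k + 1), 1 := by simp
      _ ≤ ∑ i ∈ range (k + 1), e i := sum_le_sum fun i hi => by
          rw [mem_range] at hi
          exact hpos.trans_le (he (by simp; omega) (by simpa using hkm) (by omega))

open Fin.NatCast in
theorem exists_tree_prod_eq {M : Type*} [CommMonoid M] {n : ℕ} (f : Fin (n + 1) → M)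
    (d : Fin (n + 1) → ℕ) (hd : ∑ v, d v + 1 = n) :
    ∃ (τ : Equiv.Perm (Fin (n + 1))) (p : Fin n → Fin (n + 1)),
      (∀ j, p j ≤ j.castSucc) ∧ ∏ j, f (τ (p j)) = f (τ 0) * ∏ v, f v ^ d v := by
  -- Listing the vertices by decreasing `d` gives every prefix enough children for its successors.
  set τ : Equiv.Perm (Fin (n + 1)) := Fin.revPerm.trans (Tuple.sort d)
  have hτ : Antitone (d ∘ τ) := fun a b hab => Tuple.monotone_sort d (Fin.rev_le_rev.mpr hab)
  have hsum : ∑ i ∈ range (n + 1), d (τ i) + 1 = n := by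
    rw [← Fin.sum_univ_eq_sum_range (fun i => d (τ i))]
    simpa [Fin.cast_val_eq_self, Equiv.sum_comp τ d] using hd
  set c : ℕ → ℕ := fun k => d (τ k) + if k = 0 then 1 else 0
  have hc_sum : ∀ m, ∑ i ∈ range (m + 1), c i = ∑ i ∈ range (m + 1), d (τ i) + 1 := by
    simp [c, sum_add_distrib]
  have hc : ∀ k < n + 1, k ≤ ∑ i ∈ range k, c i := by
    rintro (_ | k) hk
    · simp
    have he : AntitoneOn (fun i : ℕ => d (τ i)) (Set.Iio (n + 1)) := fun i hi j hj hij =>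
      hτ ((Fin.natCast_le_natCast (Nat.lt_succ_iff.mp hi) (Nat.lt_succ_iff.mp hj)).mpr hij)
    have := le_sum_range_succ_of_antitoneOn he (k := k) (by omega) (by omega)
    rw [hc_sum]
    omega
  refine ⟨τ, fun j => (treeParent c j : Fin (n + 1)), fun j => ?_, ?_⟩
  · rw [Fin.le_def, Fin.val_natCast, Fin.val_castSucc]
    exact (Nat.mod_le _ _).trans (Nat.findGreatest_le _)
  · have h := prod_range_treeParent c (fun k : ℕ => f (τ k)) hc
    rw [hc_sum, hsum] at h
    rw [Fin.prod_univ_eq_prod_range (fun j => f (τ (treeParent c j))), h,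
      ← Fin.prod_univ_eq_prod_range (fun k => f (τ k) ^ c k)]
    simp only [c, Fin.cast_val_eq_self, pow_add, prod_mul_distrib, Fin.val_eq_zero_iff, pow_ite,
      pow_one, pow_zero, prod_ite_eq', mem_univ, if_true, Equiv.prod_comp τ (fun v => f v ^ d v)]
    exact mul_comm _ _

section Koszul

variable {A : Type*} [CommRing A] {s : ℕ}

def koszulRow (t : Fin s → A) (a b : Fin s) : Fin s → A :=
  fun c => if c = a then -t b else if c = b then t a else 0

theorem koszulRow_apply_of_ne {t : Fin s → A} {a b c : Fin s} (hca : c ≠ a) (hcb : c ≠ b) :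
    koszulRow t a b c = 0 := by
  simp [koszulRow, hca, hcb]

theorem koszulRow_apply_right {t : Fin s → A} {a b : Fin s} (hab : a ≠ b) :
    koszulRow t a b b = t a := by
  simp [koszulRow, hab.symm]

theorem koszulRow_dotProduct (t : Fin s → A) {a b : Fin s} (hab : a ≠ b) :
    koszulRow t a b ⬝ᵥ t = 0 := by
  rw [dotProduct, Fintype.sum_eq_add a b hab fun c hc => by
    rw [koszulRow_apply_of_ne hc.1 hc.2, zero_mul], koszulRow_apply_right hab, koszulRow,
    if_pos rfl]
  ring

theorem koszulRow_mem {t : Fin s → A} {I : Ideal A} (ht : ∀ l, t l ∈ I) (a b c : Fin s) :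
    koszulRow t a b c ∈ I := by
  unfold koszulRow
  split_ifs
  exacts [I.neg_mem_iff.mpr (ht b), ht a, I.zero_mem]

theorem koszulRow_min_max (t : Fin s → A) {a b : Fin s} (hab : a ≠ b) :
    koszulRow t (min a b) (max a b) = koszulRow t a b ∨
      koszulRow t (min a b) (max a b) = -koszulRow t a b := by
  rcases le_total a b with h | h
  · simp [min_eq_left h, max_eq_right h]
  · right
    ext c
    simp only [min_eq_right h, max_eq_left h, koszulRow, Pi.neg_apply]
    split_ifs <;> simp_all

theorem associated_det_of_koszulRow_tree {n : ℕ} (t : Fin (n + 1) → A)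
    (τ : Equiv.Perm (Fin (n + 1))) {p : Fin n → Fin (n + 1)} (hp : ∀ j, p j ≤ j.castSucc)
    {G : Matrix (Fin (n + 1)) (Fin (n + 1)) A} (h0 : G 0 = Pi.single (τ 0) 1)
    (hG : ∀ j, G j.succ = koszulRow t (τ (p j)) (τ j.succ) ∨
      G j.succ = -koszulRow t (τ (p j)) (τ j.succ)) :
    Associated G.det (∏ j, t (τ (p j))) := by
  have hp' : ∀ j, p j < j.succ := fun j => (hp j).trans_lt Fin.castSucc_lt_succ
  have hlower : (G.submatrix id τ).IsLowerTriangular := by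
    intro i k hik
    change i < k at hik
    simp only [submatrix_apply, id_eq]
    induction i using Fin.cases with
    | zero => rw [h0, Pi.single_eq_of_ne (τ.injective.ne hik.ne')]
    | succ j =>
      have hzero : koszulRow t (τ (p j)) (τ j.succ) (τ k) = 0 :=
        koszulRow_apply_of_ne (τ.injective.ne ((hp' j).trans hik).ne') (τ.injective.ne hik.ne')
      rcases hG j with h | h <;> simp [h, hzero]
  have hdiag : ∀ j, Associated (G j.succ (τ j.succ)) (t (τ (p j))) := fun j => by
    have hne : τ (p j) ≠ τ j.succ := τ.injective.ne (hp' j).ne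
    rcases hG j with h | h
    · rw [h, koszulRow_apply_right hne]
    · rw [h, Pi.neg_apply, koszulRow_apply_right hne]
      exact Associated.neg_left (Associated.refl _)
  have hdet := det_permute' τ G
  rw [det_of_isLowerTriangular _ hlower, Fin.prod_univ_succ] at hdet
  simp only [submatrix_apply, id_eq, h0, Pi.single_eq_same, one_mul] at hdet
  have hsign : IsUnit ((Equiv.Perm.sign τ : ℤ) : A) :=
    (Equiv.Perm.sign τ).isUnit.map (Int.castRingHom A)
  refine (associated_unit_mul_left G.det _ hsign).symm.trans ?_
  rw [← hdet]
  exact Associated.prod _ _ _ fun j _ => hdiag j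

end Koszul

section AugmentedNs

variable {A : Type*} [CommRing A] {s : ℕ}

/-- The matrix `H` of the statement: the rows of `N_s(t)`, then the row `b`. -/
def augmentedNs (t b : Fin s → A) :
    Matrix ({p : Fin s × Fin s // p.1 < p.2} ⊕ Unit) (Fin s) A :=
  Matrix.of fun r c =>
    match r with
    | .inl q => koszulRow t q.1.1 q.1.2 c
    | .inr _ => b c

def Matrix.fittingIdeal {ρ n : Type*} [Fintype n] [DecidableEq n] (H : Matrix ρ n A) :
    Ideal A :=
  Ideal.span {d | ∃ r : n → ρ, d = (H.submatrix r id).det}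

theorem Matrix.fittingIdeal_map {A' ρ n : Type*} [CommRing A'] [Fintype n] [DecidableEq n]
    (H : Matrix ρ n A) (f : A →+* A') : H.fittingIdeal.map f = (H.map f).fittingIdeal := by
  rw [fittingIdeal, fittingIdeal, Ideal.map_span]
  congr 1
  ext x
  simp [RingHom.map_det, RingHom.mapMatrix_apply, submatrix_map, eq_comm]

theorem augmentedNs_map {A' : Type*} [CommRing A'] (t b : Fin s → A) (f : A →+* A') :
    (augmentedNs t b).map f = augmentedNs (f ∘ t) (f ∘ b) := by
  ext (q | _) c <;> simp [augmentedNs, koszulRow, apply_ite f]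

@[simp]
theorem augmentedNs_inl (t b : Fin s → A) (q : {p : Fin s × Fin s // p.1 < p.2}) :
    augmentedNs t b (.inl q) = koszulRow t q.1.1 q.1.2 :=
  rfl

@[simp]
theorem augmentedNs_inr (t b : Fin s → A) (u : Unit) : augmentedNs t b (.inr u) = b :=
  rfl

end AugmentedNs

namespace MvPolynomial

variable {R : Type*} [CommRing R] [IsDomain R] {s : ℕ}

theorem exists_det_submatrix_augmentedNs_updateRow_eq (hs : 2 ≤ s)
    (b : Fin s → MvPolynomial (Fin s) R)
    {r : Fin s → {p : Fin s × Fin s // p.1 < p.2} ⊕ Unit} {i₀ : Fin s}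
    (hr : ∀ i ≠ i₀, r i ≠ .inr ()) :
    ∃ m ∈ idealOfVars (Fin s) R ^ (s - 2),
      ∀ w, (((augmentedNs X b).submatrix r id).updateRow i₀ w).det = (w ⬝ᵥ X) * m := by
  have hrow : ∀ i ≠ i₀, ∃ q : {p : Fin s × Fin s // p.1 < p.2},
      ((augmentedNs X b).submatrix r id) i = koszulRow X q.1.1 q.1.2 := fun i hi => by
    rcases hri : r i with q | _
    · exact ⟨q, by change augmentedNs X b (r i) = _; rw [hri, augmentedNs_inl]⟩
    · exact absurd hri (hr i hi)
  have h01 : (⟨0, by omega⟩ : Fin s) ≠ ⟨1, by omega⟩ := by simp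
  simpa using exists_det_updateRow_eq_dotProduct_X_mul (M := (augmentedNs X b).submatrix r id)
    (fun i hi => by obtain ⟨q, hq⟩ := hrow i hi; rw [hq]; exact koszulRow_dotProduct _ q.2.ne)
    (fun i hi j => by
      obtain ⟨q, hq⟩ := hrow i hi
      rw [hq]
      exact koszulRow_mem (I := idealOfVars (Fin s) R) (fun l => Ideal.subset_span ⟨l, rfl⟩) _ _ _)
    h01

theorem det_submatrix_augmentedNs_mem (hs : 2 ≤ s) (b : Fin s → MvPolynomial (Fin s) R)
    (r : Fin s → {p : Fin s × Fin s // p.1 < p.2} ⊕ Unit) :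
    ((augmentedNs X b).submatrix r id).det ∈
      Ideal.span {b ⬝ᵥ X} * idealOfVars (Fin s) R ^ (s - 2) := by
  set M := (augmentedNs X b).submatrix r id
  have hM : ∀ i, M i = augmentedNs X b (r i) := fun i => rfl
  by_cases hdup : ∃ i j, i ≠ j ∧ r i = .inr () ∧ r j = .inr ()
  · obtain ⟨i, j, hij, hi, hj⟩ := hdup
    rw [det_zero_of_row_eq hij (by rw [hM, hM, hi, hj])]
    exact zero_mem _
  obtain ⟨i₀, hr⟩ : ∃ i₀, ∀ i ≠ i₀, r i ≠ .inr () := by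
    by_cases hB : ∃ i₀, r i₀ = .inr ()
    · obtain ⟨i₀, hi₀⟩ := hB
      exact ⟨i₀, fun i hi hri => hdup ⟨i, i₀, hi, hri, hi₀⟩⟩
    · push Not at hB
      exact ⟨⟨0, by omega⟩, fun i _ => hB i⟩
  obtain ⟨m, hm, hdet⟩ := exists_det_submatrix_augmentedNs_updateRow_eq hs b hr
  rw [← updateRow_eq_self M i₀, hdet]
  refine Ideal.mul_mem_mul ?_ hm
  rcases hri : r i₀ with q | _
  · rw [hM, hri, augmentedNs_inl, koszulRow_dotProduct _ q.2.ne]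
    exact zero_mem _
  · rw [hM, hri, augmentedNs_inr]
    exact Ideal.mem_span_singleton_self _

theorem mul_monomial_mem_fittingIdeal_augmentedNs (hs : 2 ≤ s)
    (b : Fin s → MvPolynomial (Fin s) R) {d : Fin s →₀ ℕ} (hd : d.degree = s - 2) :
    (b ⬝ᵥ X) * monomial d 1 ∈ (augmentedNs X b).fittingIdeal := by
  obtain ⟨n, rfl⟩ : ∃ n, s = n + 1 := ⟨s - 1, by omega⟩
  obtain ⟨τ, p, hp, hprod⟩ :=
    exists_tree_prod_eq (X : Fin (n + 1) → MvPolynomial (Fin (n + 1)) R) d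
      (by rw [Finsupp.degree_eq_sum] at hd; omega)
  have hne : ∀ j, τ (p j) ≠ τ j.succ :=
    fun j => τ.injective.ne ((hp j).trans_lt Fin.castSucc_lt_succ).ne
  set r : Fin (n + 1) → {p : Fin (n + 1) × Fin (n + 1) // p.1 < p.2} ⊕ Unit :=
    Fin.cons (.inr ()) fun j => .inl ⟨(min (τ (p j)) (τ j.succ), max (τ (p j)) (τ j.succ)),
      min_lt_max.mpr (hne j)⟩
  set M := (augmentedNs X b).submatrix r id
  obtain ⟨m, -, hm⟩ := exists_det_submatrix_augmentedNs_updateRow_eq hs b (r := r) (i₀ := 0)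
    fun i hi => by
      obtain ⟨j, rfl⟩ := Fin.exists_succ_eq.mpr hi
      simp only [r, Fin.cons_succ]
      exact Sum.inl_ne_inr
  have htree := associated_det_of_koszulRow_tree X τ hp
    (G := M.updateRow 0 (Pi.single (τ 0) 1)) (updateRow_self)
    fun j => by
      rw [updateRow_ne (Fin.succ_ne_zero j)]
      exact koszulRow_min_max X (hne j)
  rw [hm, single_dotProduct, one_mul, hprod] at htree
  have hmono := htree.of_mul_left (Associated.refl _) (X_ne_zero _)
  have hdet : M.det = (b ⬝ᵥ X) * m := by
    have h0 := hm (M 0)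
    rw [updateRow_eq_self] at h0
    exact h0
  have hmem : M.det ∈ (augmentedNs X b).fittingIdeal := Ideal.subset_span ⟨r, rfl⟩
  rw [hdet] at hmem
  rw [monomial_eq, C_1, one_mul, Finsupp.prod_fintype _ _ (fun _ => pow_zero _)]
  exact Ideal.mem_of_dvd _ (hmono.mul_left _).dvd hmem

theorem fittingIdeal_augmentedNs (hs : 2 ≤ s) (b : Fin s → MvPolynomial (Fin s) R) :
    (augmentedNs X b).fittingIdeal = Ideal.span {b ⬝ᵥ X} * idealOfVars (Fin s) R ^ (s - 2) := by
  apply le_antisymm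
  · rw [fittingIdeal, Ideal.span_le]
    rintro _ ⟨r, rfl⟩
    exact det_submatrix_augmentedNs_mem hs b r
  · rw [pow_idealOfVars_eq_span, Ideal.span_mul_span', Ideal.span_le]
    rintro _ ⟨_, rfl, _, ⟨d, hd, rfl⟩, rfl⟩
    exact mul_monomial_mem_fittingIdeal_augmentedNs hs b hd

end MvPolynomial

theorem fitting_ideal_of_Ns_with_B_row
    (s : ℕ) (hs : 2 ≤ s) :
    letI P := MvPolynomial (Fin s ⊕ Fin s) ℤ
    letI T : Fin s → P := fun l => MvPolynomial.X (Sum.inl l)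
    letI B : Fin s → P := fun l => MvPolynomial.X (Sum.inr l)
    letI ρ := {p : Fin s × Fin s // p.1 < p.2} ⊕ Unit
    letI H : Matrix ρ (Fin s) P := Matrix.of fun r c =>
      match r with
      | Sum.inl q => if c = q.1.1 then -(T q.1.2) else if c = q.1.2 then T q.1.1 else 0
      | Sum.inr _ => B c
    Ideal.span {d : P | ∃ r : Fin s → ρ, d = (H.submatrix r id).det} =
      Ideal.span {∑ l, B l * T l} * (Ideal.span (Set.range T)) ^ (s - 2) := by
  let e : MvPolynomial (Fin s) (MvPolynomial (Fin s) ℤ) →+* MvPolynomial (Fin s ⊕ Fin s) ℤ :=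
    (sumAlgEquiv ℤ (Fin s) (Fin s)).symm
  have hT : e ∘ X = fun l => X (Sum.inl l) :=
    _root_.funext (sumAlgEquiv_symm_X ℤ (Fin s) (Fin s))
  have hB : e ∘ (C ∘ X) = fun l => X (Sum.inr l) :=
    _root_.funext (sumAlgEquiv_symm_C_X ℤ (Fin s) (Fin s))
  have key := congrArg (Ideal.map e) (fittingIdeal_augmentedNs hs (C ∘ X))
  have hg : e (C ∘ X ⬝ᵥ X) = ∑ l, X (Sum.inr l) * X (Sum.inl l) := by
    simp [e, dotProduct]
  rw [fittingIdeal_map, augmentedNs_map, hT, hB, Ideal.map_mul, Ideal.map_pow, Ideal.map_span,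
    Ideal.map_span, Set.image_singleton, ← Set.range_comp, hT, hg] at key
  exact key
end

section
/- Let R be a commutative ring, F a finite free R-module, and h : F → F an R-linear endomorphism. The following are equivalent: (i) h is injective; (ii) det(h) is a non-zero-divisor of R; (iii) the cokernel of h is a torsion R-module, i.e., every element of coker(h) is annihilated by some non-zero-divisor of R. -/
/-!
By McCoy's theorem (`Matrix.isLeftRegular_iff_nonsingular`), the matrix of `h` acts injectively
exactly when its determinant is a non-zero-divisor. Both this condition and torsionness of the
cokernel are equivalent to `h ∘ g = c • id` for some endomorphism `g` and non-zero-divisor `c`: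
the adjugate provides `g` with `c = det h`, and conversely `det h * det g = c ^ rank`. On the
cokernel side, a single non-zero-divisor `c` kills the finitely generated torsion module
`F ⧸ range h`, so `c • id` has range inside `range h` and lifts through `h` because `F` is
projective.
-/

open scoped nonZeroDivisors

theorem Matrix.mulVec_injective_iff_det_mem_nonZeroDivisors {R n : Type*} [CommRing R]
    [Fintype n] [DecidableEq n] {A : Matrix n n R} :
    Function.Injective A.mulVec ↔ A.det ∈ R⁰ := by
  rw [← Matrix.isLeftRegular_iff_mulVec_injective, Matrix.isLeftRegular_iff_nonsingular,
    Matrix.nonsingular_iff_det_mem_nonZeroDivisors]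

namespace LinearMap

variable {R M : Type*} [CommRing R] [AddCommGroup M] [Module R M]

theorem injective_iff_injective_toMatrix_mulVec {ι : Type*} [Fintype ι] [DecidableEq ι]
    (b : Module.Basis ι R M) (f : M →ₗ[R] M) :
    Function.Injective f ↔ Function.Injective (toMatrix b b f).mulVec := by
  have hconj : (toMatrix b b f).mulVec ∘ b.equivFun = b.equivFun ∘ f :=
    funext (toMatrix_mulVec_repr b b f)
  rw [← EquivLike.comp_injective f b.equivFun, ← hconj, EquivLike.injective_comp]

theorem injective_iff_det_mem_nonZeroDivisors [Module.Free R M] [Module.Finite R M]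
    (f : M →ₗ[R] M) : Function.Injective f ↔ LinearMap.det f ∈ R⁰ := by
  classical
  let b := Module.Free.chooseBasis R M
  rw [injective_iff_injective_toMatrix_mulVec b,
    Matrix.mulVec_injective_iff_det_mem_nonZeroDivisors, det_toMatrix]

theorem exists_comp_eq_det_smul_id [Module.Free R M] [Module.Finite R M] (f : M →ₗ[R] M) :
    ∃ g : M →ₗ[R] M, f ∘ₗ g = LinearMap.det f • LinearMap.id := by
  classical
  let b := Module.Free.chooseBasis R M
  let A := toMatrix b b f
  refine ⟨Matrix.toLin b b A.adjugate, ?_⟩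
  calc f ∘ₗ Matrix.toLin b b A.adjugate = Matrix.toLin b b A ∘ₗ Matrix.toLin b b A.adjugate := by
        rw [Matrix.toLin_toMatrix]
    _ = LinearMap.det f • LinearMap.id := by
        rw [← Matrix.toLin_mul, Matrix.mul_adjugate, map_smul, Matrix.toLin_one, det_toMatrix]

theorem exists_comp_eq_of_range_le {N P : Type*} [AddCommGroup N] [Module R N]
    [AddCommGroup P] [Module R P] [Module.Projective R P] {f : M →ₗ[R] N} {g : P →ₗ[R] N}
    (hle : range g ≤ range f) : ∃ l : P →ₗ[R] M, f ∘ₗ l = g := by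
  obtain ⟨l, hl⟩ := Module.projective_lifting_property f.rangeRestrict
    (g.codRestrict (range f) fun x => hle (mem_range_self g x)) f.surjective_rangeRestrict
  exact ⟨l, by ext x; exact congr(($hl x : N))⟩

theorem det_mem_nonZeroDivisors_of_comp_eq_smul_id [Module.Free R M] {f g : M →ₗ[R] M}
    {c : R} (hc : c ∈ R⁰) (hfg : f ∘ₗ g = c • LinearMap.id) : LinearMap.det f ∈ R⁰ := by
  have hdet : LinearMap.det f * LinearMap.det g = c ^ Module.finrank R M := by
    rw [← det_comp, hfg, det_smul, det_id, mul_one]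
  exact (mul_mem_nonZeroDivisors.mp (hdet ▸ pow_mem hc _)).1

theorem det_mem_nonZeroDivisors_iff_exists_comp_eq_smul_id [Module.Free R M] [Module.Finite R M]
    (f : M →ₗ[R] M) :
    LinearMap.det f ∈ R⁰ ↔ ∃ c ∈ R⁰, ∃ g : M →ₗ[R] M, f ∘ₗ g = c • LinearMap.id :=
  ⟨fun hf => ⟨_, hf, exists_comp_eq_det_smul_id f⟩,
    fun ⟨_, hc, _, hfg⟩ => det_mem_nonZeroDivisors_of_comp_eq_smul_id hc hfg⟩

theorem isTorsion_quotient_range_iff_exists_comp_eq_smul_id {N : Type*} [AddCommGroup N]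
    [Module R N] [Module.Projective R N] [Module.Finite R N] (f : M →ₗ[R] N) :
    Module.IsTorsion R (N ⧸ range f) ↔ ∃ c ∈ R⁰, ∃ g : N →ₗ[R] M, f ∘ₗ g = c • LinearMap.id := by
  constructor
  · intro ht
    obtain ⟨c, hc_ann, hc⟩ := Submodule.annihilator_top_inter_nonZeroDivisors ht
    have hle : range (c • LinearMap.id : N →ₗ[R] N) ≤ range f := by
      rintro _ ⟨y, rfl⟩
      have hy := Submodule.mem_annihilator.mp hc_ann (Submodule.Quotient.mk y) Submodule.mem_top
      rwa [← Submodule.Quotient.mk_smul, Submodule.Quotient.mk_eq_zero] at hy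
    exact ⟨c, hc, exists_comp_eq_of_range_le hle⟩
  · rintro ⟨c, hc, g, hfg⟩ y
    induction y using Submodule.Quotient.induction_on with | _ y
    refine ⟨⟨c, hc⟩, ?_⟩
    rw [Submonoid.mk_smul, ← Submodule.Quotient.mk_smul, Submodule.Quotient.mk_eq_zero]
    exact ⟨g y, congr($hfg y)⟩

end LinearMap

theorem injective_iff_det_nonZeroDivisor_iff_torsion_coker
    (R : Type*) [CommRing R] (F : Type*) [AddCommGroup F] [Module R F]
    [Module.Free R F] [Module.Finite R F] (h : F →ₗ[R] F) :
    (Function.Injective h ↔ LinearMap.det h ∈ nonZeroDivisors R) ∧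
      (Function.Injective h ↔
        ∀ y : F ⧸ LinearMap.range h, ∃ r ∈ nonZeroDivisors R, r • y = 0) := by
  have hinj := LinearMap.injective_iff_det_mem_nonZeroDivisors h
  have htorsion : Module.IsTorsion R (F ⧸ LinearMap.range h) ↔
      ∀ y : F ⧸ LinearMap.range h, ∃ r ∈ R⁰, r • y = 0 :=
    ⟨fun ht y => let ⟨r, hry⟩ := @ht y; ⟨r, r.2, hry⟩,
      fun ht y => let ⟨r, hr, hry⟩ := ht y; ⟨⟨r, hr⟩, hry⟩⟩
  exact ⟨hinj, hinj.trans <|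
    (LinearMap.det_mem_nonZeroDivisors_iff_exists_comp_eq_smul_id h).trans <|
    (LinearMap.isTorsion_quotient_range_iff_exists_comp_eq_smul_id h).symm.trans htorsion⟩
end
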